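/- Let F be the finite field with 16 elements, and let C ⊆ Fˣ be the unique subgroup of order 5 of its multiplicative group. Let G = C ⋉ F be the group on C × F with multiplication (α, x)(β, y) = (αβ, βx + y), a group of order 80. Let Tr : F → F₂ denote the trace map from F to its prime field F₂ (Tr x = x + x² + x⁴ + x⁸). Then the subgroups H₁ = {(α, 0) : α ∈ C}, H₂ = {(α, α − 1) : α ∈ C}, and H₃ = {(1, x) : x ∈ F, Tr x = 0}, of orders 5, 5, and 8 respectively, satisfy the triple product property; hence G realizes ⟨5, 5, 8⟩. -/

import Mathlib

/-- The right quotient set `Q(S) = {s₁s₂⁻¹ : s₁, s₂ ∈ S}` of a subset of a group. -/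
def rightQuotient {G : Type*} [Group G] (S : Set G) : Set G :=
  {g | ∃ s₁ ∈ S, ∃ s₂ ∈ S, g = s₁ * s₂⁻¹}

/-- Subsets `S₁, S₂, S₃` of a group satisfy the triple product property if whenever
`qᵢ ∈ Q(Sᵢ)` and `q₁q₂q₃ = 1`, we have `q₁ = q₂ = q₃ = 1`. -/
def TPP {G : Type*} [Group G] (S₁ S₂ S₃ : Set G) : Prop :=
  ∀ q₁ ∈ rightQuotient S₁, ∀ q₂ ∈ rightQuotient S₂, ∀ q₃ ∈ rightQuotient S₃,
    q₁ * q₂ * q₃ = 1 → q₁ = 1 ∧ q₂ = 1 ∧ q₃ = 1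

/-- A group `G` realizes `⟨n₁, n₂, n₃⟩` if there are finite subsets `Sᵢ ⊆ G` with
`|Sᵢ| = nᵢ` satisfying the triple product property. -/
def Realizes (G : Type*) [Group G] (n₁ n₂ n₃ : ℕ) : Prop :=
  ∃ S₁ S₂ S₃ : Set G, S₁.Finite ∧ S₂.Finite ∧ S₃.Finite ∧
    S₁.ncard = n₁ ∧ S₂.ncard = n₂ ∧ S₃.ncard = n₃ ∧ TPP S₁ S₂ S₃

section Frob

variable {F : Type*} [Field F] (C : Subgroup Fˣ)

/-- Multiplication `(α, x)(β, y) = (αβ, βx + y)` on `C × F`. -/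
def frMul (p q : C × F) : C × F := (p.1 * q.1, ((q.1 : Fˣ) : F) * p.2 + q.2)

/-- Inversion for `frMul`. -/
def frInv (p : C × F) : C × F := (p.1⁻¹, -(((p.1⁻¹ : Fˣ) : F) * p.2))

lemma frMul_assoc (p q r : C × F) : frMul C (frMul C p q) r = frMul C p (frMul C q r) := by
  simp only [frMul, Prod.mk.injEq]
  refine ⟨mul_assoc _ _ _, ?_⟩
  push_cast
  ring

lemma one_frMul (p : C × F) : frMul C (1, 0) p = p := by
  simp [frMul]

lemma frMul_one (p : C × F) : frMul C p (1, 0) = p := by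
  simp [frMul]

lemma frInv_frMul (p : C × F) : frMul C (frInv C p) p = (1, 0) := by
  have h1 : ((p.1 : Fˣ) : F) * (((p.1⁻¹ : C) : Fˣ) : F) = 1 := by
    rw [← Units.val_mul, ← MulMemClass.coe_mul, mul_inv_cancel, OneMemClass.coe_one,
      Units.val_one]
  simp only [frMul, frInv, Prod.mk.injEq]
  refine ⟨inv_mul_cancel _, ?_⟩
  calc ((p.1 : Fˣ) : F) * (-((((p.1⁻¹ : C) : Fˣ) : F) * p.2)) + p.2
      = -((((p.1 : Fˣ) : F) * (((p.1⁻¹ : C) : Fˣ) : F)) * p.2) + p.2 := by ring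
    _ = (1, (0 : F)).2 := by rw [h1]; ring

/-- The semidirect product group `C ⋉ F` with multiplication `(α, x)(β, y) = (αβ, βx + y)`. -/
def frGroup : Group (C × F) where
  mul := frMul C
  one := (1, 0)
  inv := frInv C
  div p q := frMul C p (frInv C q)
  div_eq_mul_inv _ _ := rfl
  mul_assoc := frMul_assoc C
  one_mul := one_frMul C
  mul_one := frMul_one C
  inv_mul_cancel := frInv_frMul C
  npow := @npowRec (C × F) ⟨(1, 0)⟩ ⟨frMul C⟩
  npow_zero _ := rfl
  npow_succ _ _ := rfl
  zpow := @zpowRec (C × F) ⟨(1, 0)⟩ ⟨frMul C⟩ ⟨frInv C⟩ (@npowRec (C × F) ⟨(1, 0)⟩ ⟨frMul C⟩)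
  zpow_zero' _ := rfl
  zpow_succ' _ _ := rfl
  zpow_neg' _ _ := rfl

end Frob

/-!
In characteristic two a fifth root of unity `β ≠ 1` satisfies `β⁴ + β³ + β² + β + 1 = 0`, so
`Tr β = β + β² + β⁴ + β³ = 1`, while `Tr 1 = 0`. A relation `(α, 0)(β, β - 1)(1, x) = 1` in
`C ⋉ F` says `αβ = 1` and `x = 1 - β`; then `Tr x = 0` forces `β = 1`, hence `α = 1` and `x = 0`.
On `F = 𝔽₁₆` the trace is additive with `(Tr x)² = Tr x`, so it maps `F` onto `{0, 1}` (the value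
`1` being taken at a nontrivial element of `C`) and its kernel has index two, i.e. eight elements.
-/

open Function

section FrobeniusTrace

variable {R : Type*} [CommRing R] [CharP R 2]

/-- The trace of `𝔽₁₆` over `𝔽₂`, written for any ring of characteristic two. -/
def frobeniusTrace : R →+ R where
  toFun x := x + x ^ 2 + x ^ 4 + x ^ 8
  map_zero' := by simp
  map_add' x y := by
    have h (n : ℕ) : (x + y) ^ 2 ^ n = x ^ 2 ^ n + y ^ 2 ^ n := add_pow_char_pow x y 2 n
    rw [CharTwo.add_sq, ← (by norm_num : 2 ^ 2 = 4), ← (by norm_num : 2 ^ 3 = 8), h, h]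
    ring

lemma frobeniusTrace_apply (x : R) : frobeniusTrace x = x + x ^ 2 + x ^ 4 + x ^ 8 := rfl

lemma frobeniusTrace_one : frobeniusTrace (1 : R) = 0 := by
  rw [frobeniusTrace_apply]
  linear_combination (2 : R) * CharTwo.two_eq_zero (R := R)

lemma frobeniusTrace_sq (x : R) : frobeniusTrace x ^ 2 = frobeniusTrace x + x ^ 16 - x := by
  simp only [frobeniusTrace_apply, CharTwo.add_sq]
  ring

end FrobeniusTrace

section CharTwoField

variable {K : Type*} [Field K] [CharP K 2]

lemma frobeniusTrace_eq_one_of_pow_five_eq_one {b : K} (h5 : b ^ 5 = 1) (hb : b ≠ 1) :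
    frobeniusTrace b = 1 := by
  have hcyc : b ^ 4 + b ^ 3 + b ^ 2 + b + 1 = 0 := by
    have h : (b - 1) * (b ^ 4 + b ^ 3 + b ^ 2 + b + 1) = 0 := by linear_combination h5
    exact (mul_eq_zero.mp h).resolve_left (sub_ne_zero.mpr hb)
  rw [frobeniusTrace_apply]
  linear_combination b ^ 3 * h5 + hcyc - CharTwo.two_eq_zero (R := K)

lemma frobeniusTrace_one_sub_ne_zero {b : K} (h5 : b ^ 5 = 1) (hb : b ≠ 1) :
    frobeniusTrace (1 - b) ≠ 0 := by
  rw [map_sub, frobeniusTrace_one, frobeniusTrace_eq_one_of_pow_five_eq_one h5 hb]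
  simp

lemma frobeniusTrace_eq_zero_or_one {x : K} (hx : x ^ 16 = x) :
    frobeniusTrace x = 0 ∨ frobeniusTrace x = 1 := by
  refine IsIdempotentElem.iff_eq_zero_or_one.mp ?_
  rw [IsIdempotentElem, ← sq, frobeniusTrace_sq, hx, add_sub_cancel_right]

lemma ncard_setOf_frobeniusTrace_eq_zero [Fintype K] (hK : Fintype.card K = 16) {b : K}
    (hb : frobeniusTrace b = 1) : {x : K | frobeniusTrace x = 0}.ncard = 8 := by
  have hrange : ((frobeniusTrace (R := K)).range : Set K) = {0, 1} := by
    refine Set.Subset.antisymm ?_ ?_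
    · rintro _ ⟨x, rfl⟩
      exact frobeniusTrace_eq_zero_or_one (hK ▸ FiniteField.pow_card x)
    · rintro _ (rfl | rfl)
      exacts [zero_mem _, ⟨b, hb⟩]
  have hindex : (frobeniusTrace (R := K)).ker.index = 2 := by
    rw [AddSubgroup.index_ker, ← SetLike.coe_sort_coe, hrange, Nat.card_coe_set_eq,
      Set.ncard_pair zero_ne_one]
  have h := (frobeniusTrace (R := K)).ker.card_mul_index
  rw [hindex, Nat.card_eq_fintype_card (α := K), hK] at h
  have hker : Nat.card (frobeniusTrace (R := K)).ker = 8 := by omega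
  rwa [← Nat.card_coe_set_eq]

end CharTwoField

lemma rightQuotient_coe_subgroup {G : Type*} [Group G] (H : Subgroup G) :
    rightQuotient (H : Set G) = H := by
  ext g
  refine ⟨?_, fun hg => ⟨g, hg, 1, one_mem H, by simp⟩⟩
  rintro ⟨s, hs, t, ht, rfl⟩
  exact mul_mem hs (inv_mem ht)

lemma tpp_coe_subgroups_iff {G : Type*} [Group G] (H₁ H₂ H₃ : Subgroup G) :
    TPP (H₁ : Set G) H₂ H₃ ↔
      ∀ h₁ ∈ H₁, ∀ h₂ ∈ H₂, ∀ h₃ ∈ H₃, h₁ * h₂ * h₃ = 1 → h₁ = 1 ∧ h₂ = 1 ∧ h₃ = 1 := by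
  simp only [TPP, rightQuotient_coe_subgroup, SetLike.mem_coe]

lemma ncard_setOf_exists_eq {α β : Type*} {f : α → β} (hf : Injective f) :
    {b | ∃ a, b = f a}.ncard = Nat.card α := by
  have h : {b | ∃ a, b = f a} = Set.range f := Set.ext fun _ => exists_congr fun _ => eq_comm
  rw [h, Set.ncard_range_of_injective hf]

lemma ncard_setOf_exists_and_eq {α β : Type*} {f : α → β} (hf : Injective f) (P : α → Prop) :
    {b | ∃ a, P a ∧ b = f a}.ncard = {a | P a}.ncard := by
  have h : {b | ∃ a, P a ∧ b = f a} = f '' {a | P a} :=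
    Set.ext fun _ => exists_congr fun _ => and_congr_right' eq_comm
  rw [h, Set.ncard_image_of_injective _ hf]

section SemidirectProduct

variable {F : Type*} [Field F] (C : Subgroup Fˣ)

def frH₁ : @Subgroup (C × F) (frGroup C) :=
  letI := frGroup C
  { carrier := {p | ∃ α : C, p = (α, 0)}
    mul_mem' := by
      rintro _ _ ⟨α, rfl⟩ ⟨β, rfl⟩
      exact ⟨α * β, show frMul C _ _ = _ by simp [frMul]⟩
    one_mem' := ⟨1, rfl⟩
    inv_mem' := by
      rintro _ ⟨α, rfl⟩
      exact ⟨α⁻¹, show frInv C _ = _ by simp [frInv]⟩ }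

def frH₂ : @Subgroup (C × F) (frGroup C) :=
  letI := frGroup C
  { carrier := {p | ∃ α : C, p = (α, ((α : Fˣ) : F) - 1)}
    mul_mem' := by
      rintro _ _ ⟨α, rfl⟩ ⟨β, rfl⟩
      refine ⟨α * β, show frMul C _ _ = _ from ?_⟩
      simp only [frMul, Prod.mk.injEq, Subgroup.coe_mul, Units.val_mul, true_and]
      ring
    one_mem' := ⟨1, show ((1 : C), (0 : F)) = _ by simp⟩
    inv_mem' := by
      rintro _ ⟨α, rfl⟩
      refine ⟨α⁻¹, show frInv C _ = _ from ?_⟩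
      have hα : ((α : Fˣ) : F) ≠ 0 := Units.ne_zero _
      simp only [frInv, Prod.mk.injEq, InvMemClass.coe_inv, Units.val_inv_eq_inv_val, true_and]
      field_simp
      ring }

variable [CharP F 2]

def frH₃ : @Subgroup (C × F) (frGroup C) :=
  letI := frGroup C
  { carrier := {p | ∃ x : F, frobeniusTrace x = 0 ∧ p = (1, x)}
    mul_mem' := by
      rintro _ _ ⟨x, hx, rfl⟩ ⟨y, hy, rfl⟩
      exact ⟨x + y, by rw [map_add, hx, hy, add_zero], show frMul C _ _ = _ by simp [frMul]⟩
    one_mem' := ⟨0, map_zero _, rfl⟩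
    inv_mem' := by
      rintro _ ⟨x, hx, rfl⟩
      exact ⟨-x, by rw [map_neg, hx, neg_zero], show frInv C _ = _ by simp [frInv]⟩ }

theorem tpp_frH₁_frH₂_frH₃ (hC : ∀ β : C, ((β : Fˣ) : F) ^ 5 = 1) :
    @TPP (C × F) (frGroup C) (frH₁ C) (frH₂ C) (frH₃ C) := by
  let _ := frGroup C
  rw [tpp_coe_subgroups_iff]
  rintro _ ⟨α, rfl⟩ _ ⟨β, rfl⟩ _ ⟨x, hx, rfl⟩ h
  obtain ⟨hαβ, hβx⟩ := Prod.mk.inj (show frMul C (frMul C (α, 0) _) (1, x) = (1, 0) from h)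
  simp only [frMul, mul_zero, zero_add, OneMemClass.coe_one, Units.val_one, one_mul, mul_one]
    at hαβ hβx
  obtain rfl : β = 1 := by
    by_contra hβ
    refine frobeniusTrace_one_sub_ne_zero (hC β) (by simpa using hβ) ?_
    rwa [show 1 - ((β : Fˣ) : F) = x by linear_combination -hβx]
  obtain rfl : α = 1 := by simpa using hαβ
  obtain rfl : x = 0 := by simpa using hβx
  exact ⟨rfl, show ((1 : C), (((1 : C) : Fˣ) : F) - 1) = ((1 : C), (0 : F)) by simp, rfl⟩

end SemidirectProduct

theorem stmt_12_general (F : Type*) [Field F] [Fintype F] (hF : Fintype.card F = 16)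
    (C : Subgroup Fˣ) (hC : Nat.card C = 5) :
    Nat.card (C × F) = 80 ∧
    {p : C × F | ∃ α : C, p = (α, 0)}.ncard = 5 ∧
    {p : C × F | ∃ α : C, p = (α, ((α : Fˣ) : F) - 1)}.ncard = 5 ∧
    {p : C × F | ∃ x : F, x + x ^ 2 + x ^ 4 + x ^ 8 = 0 ∧ p = (1, x)}.ncard = 8 ∧
    (∃ K₁ K₂ K₃ : @Subgroup (C × F) (frGroup C),
      (K₁ : Set (C × F)) = {p : C × F | ∃ α : C, p = (α, 0)} ∧
      (K₂ : Set (C × F)) = {p : C × F | ∃ α : C, p = (α, ((α : Fˣ) : F) - 1)} ∧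
      (K₃ : Set (C × F)) = {p : C × F | ∃ x : F, x + x ^ 2 + x ^ 4 + x ^ 8 = 0 ∧ p = (1, x)}) ∧
    @TPP (C × F) (frGroup C)
      {p : C × F | ∃ α : C, p = (α, 0)}
      {p : C × F | ∃ α : C, p = (α, ((α : Fˣ) : F) - 1)}
      {p : C × F | ∃ x : F, x + x ^ 2 + x ^ 4 + x ^ 8 = 0 ∧ p = (1, x)} ∧
    @Realizes (C × F) (frGroup C) 5 5 8 := by
  have : CharP F 2 := charP_of_card_eq_prime_pow (p := 2) (f := 4) hF
  have hC5 (β : C) : ((β : Fˣ) : F) ^ 5 = 1 := by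
    rw [← Units.val_pow_eq_pow_val, ← Subgroup.coe_pow, ← hC, pow_card_eq_one']
    rfl
  have : Nontrivial C := Finite.one_lt_card_iff_nontrivial.mp (by omega)
  obtain ⟨β, hβ⟩ := exists_ne (1 : C)
  have hn₁ : {p : C × F | ∃ α : C, p = (α, 0)}.ncard = 5 :=
    hC ▸ ncard_setOf_exists_eq fun _ _ h => congrArg Prod.fst h
  have hn₂ : {p : C × F | ∃ α : C, p = (α, ((α : Fˣ) : F) - 1)}.ncard = 5 :=
    hC ▸ ncard_setOf_exists_eq fun _ _ h => congrArg Prod.fst h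
  have hn₃ : {p : C × F | ∃ x : F, x + x ^ 2 + x ^ 4 + x ^ 8 = 0 ∧ p = (1, x)}.ncard = 8 :=
    (ncard_setOf_exists_and_eq (f := fun x : F => ((1 : C), x)) (fun _ _ h => congrArg Prod.snd h)
      _).trans (ncard_setOf_frobeniusTrace_eq_zero hF
        (frobeniusTrace_eq_one_of_pow_five_eq_one (hC5 β) (by simpa using hβ)))
  have hTPP := tpp_frH₁_frH₂_frH₃ C hC5
  exact ⟨by rw [Nat.card_prod, hC, Nat.card_eq_fintype_card (α := F), hF], hn₁, hn₂, hn₃,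
    ⟨frH₁ C, frH₂ C, frH₃ C, rfl, rfl, rfl⟩, hTPP,
    _, _, _, Set.toFinite _, Set.toFinite _, Set.toFinite _, hn₁, hn₂, hn₃, hTPP⟩

theorem stmt_12 (F : Type*) [Field F] [Fintype F] (hF : Fintype.card F = 16)
    (C : Subgroup Fˣ) (hC : Nat.card C = 5)
    (hCuniq : ∀ C' : Subgroup Fˣ, Nat.card C' = 5 → C' = C) :
    Nat.card (C × F) = 80 ∧
    {p : C × F | ∃ α : C, p = (α, 0)}.ncard = 5 ∧
    {p : C × F | ∃ α : C, p = (α, ((α : Fˣ) : F) - 1)}.ncard = 5 ∧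
    {p : C × F | ∃ x : F, x + x ^ 2 + x ^ 4 + x ^ 8 = 0 ∧ p = (1, x)}.ncard = 8 ∧
    (∃ K₁ K₂ K₃ : @Subgroup (C × F) (frGroup C),
      (K₁ : Set (C × F)) = {p : C × F | ∃ α : C, p = (α, 0)} ∧
      (K₂ : Set (C × F)) = {p : C × F | ∃ α : C, p = (α, ((α : Fˣ) : F) - 1)} ∧
      (K₃ : Set (C × F)) = {p : C × F | ∃ x : F, x + x ^ 2 + x ^ 4 + x ^ 8 = 0 ∧ p = (1, x)}) ∧
    @TPP (C × F) (frGroup C)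
      {p : C × F | ∃ α : C, p = (α, 0)}
      {p : C × F | ∃ α : C, p = (α, ((α : Fˣ) : F) - 1)}
      {p : C × F | ∃ x : F, x + x ^ 2 + x ^ 4 + x ^ 8 = 0 ∧ p = (1, x)} ∧
    @Realizes (C × F) (frGroup C) 5 5 8 :=
  stmt_12_general F hF C hC
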